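/- If 0 < x₁* < 1/2 and ε > 0 and N ≥ 1, then both eigenvalues of the Jacobian matrix [[(2x₁*−1)/ε, 1/ε], [−∑_{n=1}^{N} n(x₁*)^{n−1}, 0]] have strictly negative real part; hence the equilibrium of the co-moving system is linearly asymptotically stable. -/
import Mathlib

/-- roots of z² + bz + c with b, c > 0 real have negative real part -/
lemma quad_root_neg_re (b c : ℝ) (hb : 0 < b) (hc : 0 < c) (z : ℂ)
    (h : z ^ 2 + (b : ℂ) * z + (c : ℂ) = 0) : z.re < 0 := by
  have him : 2 * z.re * z.im + b * z.im = 0 := by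
    have := congrArg Complex.im h
    simp [pow_two, Complex.mul_im] at this; linarith
    -- may need adjustment
  have hre : z.re ^ 2 - z.im ^ 2 + b * z.re + c = 0 := by
    have := congrArg Complex.re h
    simp [pow_two, Complex.mul_re, Complex.mul_im] at this
    nlinarith [this]
  rcases eq_or_ne z.im 0 with hy | hy
  · nlinarith [sq_nonneg z.re]
  · have : 2 * z.re + b = 0 := by
      have := mul_eq_zero.mp (by linarith [him] : (2 * z.re + b) * z.im = 0)
      tauto
    linarith

/-- If `0 < x₁* < 1/2`, `ε > 0`, `N ≥ 1`, then both eigenvalues of the Jacobian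
`[[(2x₁*−1)/ε, 1/ε], [−∑ n(x₁*)^{n−1}, 0]]` have strictly negative real part. -/
theorem stmt6 (N : ℕ) (hN : 1 ≤ N) (ε a : ℝ) (hε : 0 < ε) (ha0 : 0 < a) (ha : a < 1 / 2) :
    ∀ z : ℂ, z ∈ spectrum ℂ
      ((!![(2 * a - 1) / ε, 1 / ε;
          -(∑ n ∈ Finset.Icc 1 N, (n : ℝ) * a ^ (n - 1)), 0] :
        Matrix (Fin 2) (Fin 2) ℝ).map Complex.ofReal) → z.re < 0 := by
  intro z hz
  set S : ℝ := ∑ n ∈ Finset.Icc 1 N, (n : ℝ) * a ^ (n - 1) with hS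
  have hSpos : 0 < S := by
    rw [hS]
    apply Finset.sum_pos
    · intro n hn
      simp only [Finset.mem_Icc] at hn
      have : (0:ℝ) < n := by exact_mod_cast hn.1
      positivity
    · exact ⟨1, by simp [hN]⟩
  rw [spectrum.mem_iff] at hz
  have hdet : Matrix.det (algebraMap ℂ (Matrix (Fin 2) (Fin 2) ℂ) z -
      (!![(2 * a - 1) / ε, 1 / ε; -S, 0] :
        Matrix (Fin 2) (Fin 2) ℝ).map Complex.ofReal) = 0 := by
    by_contra h
    exact hz ((Matrix.isUnit_iff_isUnit_det _).mpr (isUnit_iff_ne_zero.mpr h))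
  have key : z ^ 2 + (((1 - 2 * a) / ε : ℝ) : ℂ) * z + ((S / ε : ℝ) : ℂ) = 0 := by
    rw [Matrix.det_fin_two] at hdet
    simp only [Matrix.algebraMap_matrix_apply, Matrix.sub_apply, Matrix.map_apply,
      Matrix.cons_val', Matrix.cons_val_zero, Matrix.cons_val_one, Matrix.head_cons,
      Matrix.head_fin_const, Matrix.empty_val', Matrix.cons_val_fin_one] at hdet
    push_cast
    push_cast at hdet
    ring_nf
    ring_nf at hdet
    simp_all
    linear_combination hdet
  exact quad_root_neg_re _ _ (div_pos (by linarith) hε) (div_pos hSpos hε) z key
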